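/- arXiv:2403.10564 — 4 statements merged into one kernel-verified Lean document; each statement's English description precedes it below -/
import Mathlib

section
/- If in a multipartite quantum scenario the measurements of one party are jointly measurable, then the resulting behaviour is Bell local: for any N-partite state ρ and any sets of POVMs {M^n_{a_n|x_n}} for the other parties, if {M^1_{a|x}} = {Σ_λ p(a|x,λ) G_λ} is jointly measurable, the behaviour p(a_1…a_N|x_1…x_N) = Tr[ρ (M^1_{a_1|x_1} ⊗ … ⊗ M^N_{a_N|x_N})] is Bell local in the bipartition separating party 1 from the rest. -/
open Matrix BigOperators Kronecker ComplexOrder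

noncomputable section

abbrev Op (d : ℕ) := Matrix (Fin d) (Fin d) ℂ

def IsCondProb {nx na : ℕ} (p : Fin nx → Fin na → ℝ) : Prop :=
  (∀ x a, 0 ≤ p x a) ∧ ∀ x, ∑ a, p x a = 1

def IsPOVM {d m : ℕ} (G : Fin m → Op d) : Prop :=
  (∀ l, (G l).PosSemidef) ∧ ∑ l, G l = 1

def IsPOVMSet {d nx na : ℕ} (M : Fin nx → Fin na → Op d) : Prop :=
  ∀ x, IsPOVM (M x)

def IsDensity {n : Type*} [Fintype n] (ρ : Matrix n n ℂ) : Prop :=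
  ρ.PosSemidef ∧ ρ.trace = 1

def JointlyMeasurable {d nx na : ℕ} (M : Fin nx → Fin na → Op d) : Prop :=
  ∃ (m : ℕ) (G : Fin m → Op d) (p : Fin m → Fin nx → Fin na → ℝ),
    IsPOVM G ∧ (∀ l, IsCondProb (p l)) ∧
    ∀ x a, M x a = ∑ l, p l x a • G l

def SeparableMap {d nx na : ℕ} (M : Fin nx → Fin na → Op d) : Prop :=
  ∃ (m : ℕ) (G : Fin m → Op d) (p : Fin m → Fin nx → Fin na → ℝ),
    (∀ l, (G l).PosSemidef) ∧ (∀ l, IsCondProb (p l)) ∧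
    ∀ x a, M x a = ∑ l, p l x a • G l

def tensorOp {d N : ℕ} (A : Fin N → Op d) : Matrix (Fin N → Fin d) (Fin N → Fin d) ℂ :=
  Matrix.of fun i j => ∏ n, A n (i n) (j n)

def BehaviourOf {d N nx na : ℕ} (M : Fin nx → Fin na → Op d)
    (ρ : Matrix (Fin N → Fin d) (Fin N → Fin d) ℂ) :
    (Fin N → Fin nx) → (Fin N → Fin na) → ℂ :=
  fun x a => (ρ * tensorOp (fun n => M (x n) (a n))).trace

def BellLocalC {N nx na : ℕ} (p : (Fin N → Fin nx) → (Fin N → Fin na) → ℂ) : Prop :=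
  ∃ (m : ℕ) (q : Fin m → ℝ) (c : Fin m → Fin N → Fin nx → Fin na → ℝ),
    (∀ l, 0 ≤ q l) ∧ (∑ l, q l = 1) ∧ (∀ l n, IsCondProb (c l n)) ∧
    ∀ x a, p x a = ((∑ l, q l * ∏ n, c l n (x n) (a n) : ℝ) : ℂ)

def BellLocalR {N nx na : ℕ} (p : (Fin N → Fin nx) → (Fin N → Fin na) → ℝ) : Prop :=
  ∃ (m : ℕ) (q : Fin m → ℝ) (c : Fin m → Fin N → Fin nx → Fin na → ℝ),
    (∀ l, 0 ≤ q l) ∧ (∑ l, q l = 1) ∧ (∀ l n, IsCondProb (c l n)) ∧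
    ∀ x a, p x a = ∑ l, q l * ∏ n, c l n (x n) (a n)

def SeparableState {d N : ℕ} (ρ : Matrix (Fin N → Fin d) (Fin N → Fin d) ℂ) : Prop :=
  ∃ (m : ℕ) (q : Fin m → ℝ) (σ : Fin m → Fin N → Op d),
    (∀ l, 0 ≤ q l) ∧ (∀ l n, IsDensity (σ l n)) ∧
    ρ = ∑ l, q l • tensorOp (σ l)

def SepBipartite {d e : ℕ} (ρ : Matrix (Fin d × Fin e) (Fin d × Fin e) ℂ) : Prop :=
  ∃ (m : ℕ) (q : Fin m → ℝ) (σ : Fin m → Op d) (τ : Fin m → Matrix (Fin e) (Fin e) ℂ),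
    (∀ l, 0 ≤ q l) ∧ (∀ l, (σ l).PosSemidef) ∧ (∀ l, (τ l).PosSemidef) ∧
    ρ = ∑ l, q l • (σ l ⊗ₖ τ l)

def tensorPowMap {d N : ℕ} (Φ : Op d →ₗ[ℂ] Op d)
    (ρ : Matrix (Fin N → Fin d) (Fin N → Fin d) ℂ) :
    Matrix (Fin N → Fin d) (Fin N → Fin d) ℂ :=
  ∑ i, ∑ j, ρ i j • tensorOp (fun n => Φ (Matrix.single (i n) (j n) 1))

def tensorId {d e : ℕ} (Φ : Op d →ₗ[ℂ] Op d)
    (ρ : Matrix (Fin d × Fin e) (Fin d × Fin e) ℂ) :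
    Matrix (Fin d × Fin e) (Fin d × Fin e) ℂ :=
  Matrix.of fun p q => Φ (Matrix.of fun i j => ρ (i, p.2) (j, q.2)) p.1 q.1

def IsPositiveMap {d : ℕ} (Φ : Op d →ₗ[ℂ] Op d) : Prop :=
  ∀ ρ : Op d, ρ.PosSemidef → (Φ ρ).PosSemidef

def maxEnt (d : ℕ) : Matrix (Fin d × Fin d) (Fin d × Fin d) ℂ :=
  Matrix.of fun p q => if p.1 = p.2 ∧ q.1 = q.2 then (1 / d : ℂ) else 0

def choi {d : ℕ} (Φ : Op d →ₗ[ℂ] Op d) : Matrix (Fin d × Fin d) (Fin d × Fin d) ℂ :=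
  Matrix.of fun p q => (1 / d : ℂ) * Φ (Matrix.single p.2 q.2 1) p.1 q.1

def IsCompletelyPositive {d : ℕ} (Φ : Op d →ₗ[ℂ] Op d) : Prop :=
  (choi Φ).PosSemidef

def EntanglementBreaking {d : ℕ} (Φ : Op d →ₗ[ℂ] Op d) : Prop :=
  ∀ (e : ℕ) (ρ : Matrix (Fin d × Fin e) (Fin d × Fin e) ℂ),
    IsDensity ρ → SepBipartite (tensorId Φ ρ)

def LEA {d : ℕ} (Φ : Op d →ₗ[ℂ] Op d) : Prop :=
  ∀ (N : ℕ) (ρ : Matrix (Fin N → Fin d) (Fin N → Fin d) ℂ),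
    IsDensity ρ → SeparableState (tensorPowMap Φ ρ)

def noisy (d : ℕ) (η : ℝ) (A : Op d) : Op d :=
  η • A + (((1 - η : ℝ) : ℂ) * A.trace / d) • (1 : Op d)

/-! Write party 0's measurements as `M_{a|x} = ∑_λ p(a|x,λ) G_λ`. The behaviour becomes
`∑_λ p(a₀|x₀,λ) Tr[ρ (G_λ ⊗ M_{b|y})]`, where `M_{b|y}` is the product measurement of the other
parties. The weights `Tr[ρ (G_λ ⊗ M_{b|y})]` are nonnegative and sum over `b` to
`q_λ = Tr[ρ (G_λ ⊗ 1)]`, which does not depend on `y` and satisfies `∑_λ q_λ = Tr ρ = 1`; dividing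
by `q_λ` yields a conditional distribution `r(b|y,λ)` for the remaining parties. -/

lemma Matrix.trace_submatrix_equiv {m n R : Type*} [Fintype m] [Fintype n] [AddCommMonoid R]
    (A : Matrix n n R) (e : m ≃ n) : (A.submatrix e e).trace = A.trace :=
  e.sum_comp fun j => A j j

lemma Matrix.trace_mul_submatrix_equiv {m n : Type*} [Fintype m] [Fintype n]
    (A : Matrix m m ℂ) (B : Matrix n n ℂ) (e : m ≃ n) :
    (A * B.submatrix e e).trace = (A.submatrix e.symm e.symm * B).trace := by
  have hA : A = (A.submatrix e.symm e.symm).submatrix e e := by simp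
  rw [hA, Matrix.submatrix_mul_equiv, ← hA, Matrix.trace_submatrix_equiv]

lemma Matrix.PosSemidef.trace_mul_nonneg {n : Type*} [Fintype n] [DecidableEq n]
    {ρ A : Matrix n n ℂ} (hρ : ρ.PosSemidef) (hA : A.PosSemidef) : 0 ≤ (ρ * A).trace := by
  open scoped MatrixOrder in
  obtain ⟨B, rfl⟩ := CStarAlgebra.nonneg_iff_eq_star_mul_self.mp hA.nonneg
  rw [← mul_assoc, Matrix.trace_mul_cycle]
  exact (hρ.mul_mul_conjTranspose_same B).trace_nonneg

lemma Matrix.PosSemidef.trace_mul_eq_re {n : Type*} [Fintype n] [DecidableEq n]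
    {ρ A : Matrix n n ℂ} (hρ : ρ.PosSemidef) (hA : A.PosSemidef) :
    (ρ * A).trace = ((ρ * A).trace.re : ℂ) :=
  Complex.eq_re_of_ofReal_le (r := 0) (by simpa using hρ.trace_mul_nonneg hA)

lemma Matrix.kronecker_sum {R α β ι : Type*} [NonUnitalNonAssocSemiring R]
    (A : Matrix α α R) (B : ι → Matrix β β R) (s : Finset ι) :
    A ⊗ₖ ∑ i ∈ s, B i = ∑ i ∈ s, A ⊗ₖ B i := by
  ext ⟨i, i'⟩ ⟨j, j'⟩
  simp [Matrix.sum_apply, Finset.mul_sum]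

lemma Matrix.sum_kronecker {R α β ι : Type*} [NonUnitalNonAssocSemiring R]
    (A : ι → Matrix α α R) (B : Matrix β β R) (s : Finset ι) :
    (∑ i ∈ s, A i) ⊗ₖ B = ∑ i ∈ s, A i ⊗ₖ B := by
  ext ⟨i, i'⟩ ⟨j, j'⟩
  simp [Matrix.sum_apply, Finset.sum_mul]

lemma IsDensity.nonempty {n : Type*} [Fintype n] {ρ : Matrix n n ℂ} (hρ : IsDensity ρ) :
    Nonempty n := by
  by_contra h
  rw [not_nonempty_iff] at h
  simpa [Matrix.trace] using hρ.2

lemma exists_probability_mul_of_sum_eq {B : Type*} [Fintype B] [Nonempty B] {t : B → ℝ}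
    {s : ℝ} (ht : ∀ b, 0 ≤ t b) (hs : ∑ b, t b = s) :
    ∃ r : B → ℝ, (∀ b, 0 ≤ r b) ∧ ∑ b, r b = 1 ∧ ∀ b, t b = s * r b := by
  rcases (hs ▸ Finset.sum_nonneg fun b _ => ht b : 0 ≤ s).eq_or_lt with rfl | hs_pos
  · refine ⟨fun _ => (Fintype.card B : ℝ)⁻¹, fun _ => by positivity, ?_, fun b => ?_⟩
    · simp
    · simpa using (Finset.sum_eq_zero_iff_of_nonneg fun b _ => ht b).mp hs b (Finset.mem_univ b)
  · refine ⟨fun b => t b / s, fun b => div_nonneg (ht b) hs_pos.le, ?_, fun b => ?_⟩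
    · rw [← Finset.sum_div, hs, div_self hs_pos.ne']
    · field_simp

section TensorOp

variable {d N : ℕ}

lemma tensorOp_conjTranspose (A : Fin N → Op d) :
    (tensorOp A)ᴴ = tensorOp fun n => (A n)ᴴ := by
  ext i j
  simp [tensorOp, Matrix.conjTranspose_apply, star_prod]

lemma tensorOp_mul (A B : Fin N → Op d) :
    tensorOp A * tensorOp B = tensorOp fun n => A n * B n := by
  ext i j
  simp only [tensorOp, Matrix.mul_apply, Matrix.of_apply]
  rw [Finset.prod_univ_sum, Fintype.piFinset_univ]
  exact Finset.sum_congr rfl fun k _ => Finset.prod_mul_distrib.symm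

lemma posSemidef_tensorOp {A : Fin N → Op d} (hA : ∀ n, (A n).PosSemidef) :
    (tensorOp A).PosSemidef := by
  open scoped MatrixOrder in
  choose B hB using fun n => CStarAlgebra.nonneg_iff_eq_star_mul_self.mp (hA n).nonneg
  have hAB : tensorOp A = (tensorOp B)ᴴ * tensorOp B := by
    rw [tensorOp_conjTranspose, tensorOp_mul]
    exact congrArg tensorOp (funext hB)
  rw [hAB]
  exact Matrix.posSemidef_conjTranspose_mul_self _

lemma tensorOp_one : tensorOp (fun _ : Fin N => (1 : Op d)) = 1 := by
  ext i j
  by_cases h : i = j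
  · subst h
    simp [tensorOp, Matrix.one_apply]
  · obtain ⟨n, hn⟩ : ∃ n, i n ≠ j n := Function.ne_iff.mp h
    simp only [tensorOp, Matrix.of_apply, Matrix.one_apply, if_neg h]
    exact Finset.prod_eq_zero (Finset.mem_univ n) (by simp [hn])

lemma sum_tensorOp {ι : Type*} [Fintype ι] [DecidableEq ι] (A : Fin N → ι → Op d) :
    ∑ b : Fin N → ι, tensorOp (fun n => A n (b n)) = tensorOp fun n => ∑ c, A n c := by
  ext i j
  simp only [tensorOp, Matrix.sum_apply, Matrix.of_apply]
  rw [Finset.prod_univ_sum, Fintype.piFinset_univ]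

lemma tensorOp_eq_submatrix_kronecker (A : Fin (N + 1) → Op d) :
    tensorOp A = (A 0 ⊗ₖ tensorOp fun n => A n.succ).submatrix
      (Fin.consEquiv fun _ => Fin d).symm (Fin.consEquiv fun _ => Fin d).symm := by
  ext i j
  simp [tensorOp, Fin.prod_univ_succ, Fin.tail]

lemma sum_tensorOp_eq_one {nx na : ℕ} {M : Fin N → Fin nx → Fin na → Op d}
    (hM : ∀ n, IsPOVMSet (M n)) (y : Fin N → Fin nx) :
    ∑ b : Fin N → Fin na, tensorOp (fun n => M n (y n) (b n)) = 1 := by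
  rw [sum_tensorOp, ← tensorOp_one]
  exact congrArg tensorOp (funext fun n => (hM n (y n)).2)

end TensorOp

theorem exists_trace_mul_kronecker_eq_mul_condProb {α β Λ Y B : Type*}
    [Fintype α] [DecidableEq α] [Fintype β] [DecidableEq β] [Fintype Λ] [Fintype B]
    {ρ : Matrix (α × β) (α × β) ℂ} (hρ : IsDensity ρ)
    {G : Λ → Matrix α α ℂ} (hG : ∀ l, (G l).PosSemidef) (hGsum : ∑ l, G l = 1)
    {F : Y → B → Matrix β β ℂ} (hF : ∀ y b, (F y b).PosSemidef) (hFsum : ∀ y, ∑ b, F y b = 1) :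
    ∃ (q : Λ → ℝ) (r : Λ → Y → B → ℝ), (∀ l, 0 ≤ q l) ∧ ∑ l, q l = 1 ∧
      (∀ l y b, 0 ≤ r l y b) ∧ (∀ l y, ∑ b, r l y b = 1) ∧
      ∀ l y b, (ρ * (G l ⊗ₖ F y b)).trace = ((q l * r l y b : ℝ) : ℂ) := by
  set q : Λ → ℝ := fun l => (ρ * (G l ⊗ₖ 1)).trace.re
  have hq : ∀ l, 0 ≤ q l := fun l =>
    (Complex.nonneg_iff.mp (hρ.1.trace_mul_nonneg ((hG l).kronecker .one))).1
  have hqsum : ∑ l, q l = 1 := by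
    simp only [q, ← Complex.re_sum, ← Matrix.trace_sum, ← Matrix.mul_sum, ← Matrix.sum_kronecker,
      hGsum, Matrix.one_kronecker_one, mul_one, hρ.2, Complex.one_re]
  have hmarginal : ∀ l y, ∑ b, (ρ * (G l ⊗ₖ F y b)).trace.re = q l := fun l y => by
    simp only [q, ← Complex.re_sum, ← Matrix.trace_sum, ← Matrix.mul_sum, ← Matrix.kronecker_sum,
      hFsum]
  have : Nonempty β := hρ.nonempty.map Prod.snd
  have hB : Y → Nonempty B := fun y => by
    by_contra h
    rw [not_nonempty_iff] at h
    simpa using hFsum y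
  choose r hr hrsum hqr using fun l y =>
    haveI := hB y
    exists_probability_mul_of_sum_eq (fun b => (Complex.nonneg_iff.mp
      (hρ.1.trace_mul_nonneg ((hG l).kronecker (hF y b)))).1) (hmarginal l y)
  refine ⟨q, r, hq, hqsum, hr, hrsum, fun l y b => ?_⟩
  rw [hρ.1.trace_mul_eq_re ((hG l).kronecker (hF y b)), hqr l y b]

/-- if the measurements of party `0` are jointly measurable, then for any
`(N+1)`-partite state and any POVM sets for the other parties, the behaviour is Bell local
in the bipartition separating party `0` from the rest. -/
theorem stmt_2 {d N nx na : ℕ} (M : Fin (N + 1) → Fin nx → Fin na → Op d)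
    (hM : ∀ n, IsPOVMSet (M n)) (hJM : JointlyMeasurable (M 0))
    (ρ : Matrix (Fin (N + 1) → Fin d) (Fin (N + 1) → Fin d) ℂ) (hρ : IsDensity ρ) :
    ∃ (m : ℕ) (q : Fin m → ℝ) (p1 : Fin m → Fin nx → Fin na → ℝ)
      (r : Fin m → (Fin N → Fin nx) → (Fin N → Fin na) → ℝ),
      (∀ l, 0 ≤ q l) ∧ (∑ l, q l = 1) ∧ (∀ l, IsCondProb (p1 l)) ∧
      (∀ l x a, 0 ≤ r l x a) ∧ (∀ l x, ∑ a, r l x a = 1) ∧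
      ∀ (x : Fin (N + 1) → Fin nx) (a : Fin (N + 1) → Fin na),
        (ρ * tensorOp (fun n => M n (x n) (a n))).trace
          = ((∑ l, q l * p1 l (x 0) (a 0)
              * r l (fun n => x n.succ) (fun n => a n.succ) : ℝ) : ℂ) := by
  obtain ⟨m, G, p, ⟨hG, hGsum⟩, hp, hM0⟩ := hJM
  set e := Fin.consEquiv fun _ : Fin (N + 1) => Fin d
  obtain ⟨q, r, hq, hqsum, hr, hrsum, hqr⟩ :=
    exists_trace_mul_kronecker_eq_mul_condProb (ρ := ρ.submatrix e e)
      ⟨hρ.1.submatrix e, (Matrix.trace_submatrix_equiv ..).trans hρ.2⟩ hG hGsum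
      (fun (y : Fin N → Fin nx) (b : Fin N → Fin na) =>
        posSemidef_tensorOp fun n => (hM n.succ (y n)).1 (b n))
      (sum_tensorOp_eq_one fun n => hM n.succ)
  refine ⟨m, q, p, r, hq, hqsum, hp, hr, hrsum, fun x a => ?_⟩
  rw [tensorOp_eq_submatrix_kronecker, Matrix.trace_mul_submatrix_equiv]
  simp only [Equiv.symm_symm, hM0, Matrix.sum_kronecker, Matrix.smul_kronecker,
    Matrix.mul_sum, Matrix.mul_smul, Matrix.trace_sum, Matrix.trace_smul, Complex.ofReal_sum]
  refine Finset.sum_congr rfl fun l _ => ?_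
  rw [Complex.real_smul, hqr]
  push_cast
  ring
end
end

section
/- Let M = {M_{a|x}} be a set of POVMs on ℂ^d such that for every N and every N-partite state ρ_N on (ℂ^d)^{⊗N}, the behaviour Tr[ρ_N (M_{a_1|x_1} ⊗ … ⊗ M_{a_N|x_N})] is Bell local. Then for any positive linear map R̃ : B(n_a,n_x) → density matrices on ℂ^d, the composition Ψ = R̃ ∘ M is locally entanglement annihilating: Ψ^{⊗N}(ρ_N) is a separable quantum state for every N and every state ρ_N. -/
open Matrix BigOperators Kronecker ComplexOrder

noncomputable section

/-! `Ψ^{⊗N}` factors as `R^{⊗N} ∘ M^{⊗N}`: it sends `ρ` to `R^{⊗N}` applied to the behaviour of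
`ρ`. The map `R^{⊗N}` is linear and sends a product `c₁ ⋯ c_N` of conditional probabilities to the
product state `R c₁ ⊗ ⋯ ⊗ R c_N`, so it sends a Bell-local behaviour, a convex combination of such
products, to a separable state. -/

section

variable {d N nx na : ℕ}

theorem tensorOp_sum {ι : Type*} [Fintype ι] (A : Fin N → ι → Op d) :
    tensorOp (fun n => ∑ t, A n t) = ∑ g : Fin N → ι, tensorOp (fun n => A n (g n)) := by
  ext u v
  simp [tensorOp, Matrix.sum_apply, Fintype.prod_sum]

theorem tensorOp_smul (c : Fin N → ℂ) (A : Fin N → Op d) :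
    tensorOp (fun n => c n • A n) = (∏ n, c n) • tensorOp A := by
  ext u v
  simp [tensorOp, Finset.prod_mul_distrib]

theorem LinearMap.apply_eq_sum_single₂ {K α β V : Type*} [Semiring K] [Fintype α] [Fintype β]
    [DecidableEq α] [DecidableEq β] [AddCommMonoid V] [Module K V]
    (R : (α → β → K) →ₗ[K] V) (f : α → β → K) :
    R f = ∑ x, ∑ a, f x a • R (Pi.single x (Pi.single a 1)) := by
  have hf : f = ∑ x, ∑ a, f x a • Pi.single x (Pi.single a (1 : K)) := by
    ext x a
    simp [Pi.single_apply, Finset.sum_apply, ite_apply]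
  conv_lhs => rw [hf]
  simp only [map_sum, map_smul]

theorem BehaviourOf_apply (M : Fin nx → Fin na → Op d)
    (ρ : Matrix (Fin N → Fin d) (Fin N → Fin d) ℂ) (x : Fin N → Fin nx) (a : Fin N → Fin na) :
    BehaviourOf M ρ x a = ∑ i, ∑ j, ρ i j * ∏ n, M (x n) (a n) (j n) (i n) := by
  simp [BehaviourOf, Matrix.trace, Matrix.mul_apply, tensorOp]

variable (R : (Fin nx → Fin na → ℂ) →ₗ[ℂ] Op d)

/-- `R^{⊗N}`, defined through its values on the point masses `δ_x ⊗ δ_a`. -/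
def tensorPowPrep :
    ((Fin N → Fin nx) → (Fin N → Fin na) → ℂ) →ₗ[ℂ] Matrix (Fin N → Fin d) (Fin N → Fin d) ℂ where
  toFun P := ∑ x, ∑ a, P x a • tensorOp (fun n => R (Pi.single (x n) (Pi.single (a n) 1)))
  map_add' P Q := by simp [add_smul, Finset.sum_add_distrib]
  map_smul' c P := by simp [mul_smul, Finset.smul_sum]

theorem tensorPowPrep_prod (c : Fin N → Fin nx → Fin na → ℂ) :
    tensorPowPrep R (fun x a => ∏ n, c n (x n) (a n)) = tensorOp (fun n => R (c n)) := by
  simp only [fun n => LinearMap.apply_eq_sum_single₂ R (c n), tensorOp_sum, tensorOp_smul]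
  rfl

theorem tensorPowMap_eq_tensorPowPrep (M : Fin nx → Fin na → Op d) (Ψ : Op d →ₗ[ℂ] Op d)
    (hΨ : ∀ ρ : Op d, Ψ ρ = R (fun x a => (M x a * ρ).trace))
    (ρ : Matrix (Fin N → Fin d) (Fin N → Fin d) ℂ) :
    tensorPowMap Ψ ρ = tensorPowPrep R (BehaviourOf M ρ) := by
  have hΨ_unit : ∀ i j : Fin d, Ψ (Matrix.single i j 1) = R (fun x a => M x a j i) := by
    intro i j
    simp [hΨ, Matrix.trace_mul_single]
  have hbeh : BehaviourOf M ρ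
      = ∑ i, ∑ j, ρ i j • fun x a => ∏ n, M (x n) (a n) (j n) (i n) := by
    ext x a
    simp [BehaviourOf_apply, Finset.sum_apply]
  simp only [tensorPowMap, hΨ_unit, hbeh, map_sum, map_smul]
  refine Finset.sum_congr rfl fun i _ => Finset.sum_congr rfl fun j _ => ?_
  exact congrArg _ (tensorPowPrep_prod R fun n x a => M x a (j n) (i n)).symm

theorem separableState_tensorPowPrep {P : (Fin N → Fin nx) → (Fin N → Fin na) → ℂ}
    (hP : BellLocalC P)
    (hR : ∀ p : Fin nx → Fin na → ℝ, IsCondProb p →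
      IsDensity (R (fun x a => ((p x a : ℝ) : ℂ)))) :
    SeparableState (tensorPowPrep R P) := by
  obtain ⟨m, q, c, hq, -, hc, hPqc⟩ := hP
  refine ⟨m, q, fun l n => R (fun x a => ((c l n x a : ℝ) : ℂ)), hq,
    fun l n => hR _ (hc l n), ?_⟩
  have hP_eq : P = ∑ l, (q l : ℂ) • fun x a => ∏ n, ((c l n (x n) (a n) : ℝ) : ℂ) := by
    ext x a
    simp [hPqc, Finset.sum_apply]
  rw [hP_eq, map_sum]
  refine Finset.sum_congr rfl fun l _ => ?_
  rw [map_smul, Complex.coe_smul]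
  exact congrArg _ (tensorPowPrep_prod R fun n x a => ((c l n x a : ℝ) : ℂ))

end

theorem stmt_9_general {d nx na : ℕ} (M : Fin nx → Fin na → Op d)
    (hloc : ∀ (N : ℕ) (ρ : Matrix (Fin N → Fin d) (Fin N → Fin d) ℂ),
      IsDensity ρ → BellLocalC (BehaviourOf M ρ))
    (R : (Fin nx → Fin na → ℂ) →ₗ[ℂ] Op d)
    (hR : ∀ p : Fin nx → Fin na → ℝ, IsCondProb p →
      IsDensity (R (fun x a => ((p x a : ℝ) : ℂ))))
    (Ψ : Op d →ₗ[ℂ] Op d)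
    (hΨ : ∀ ρ : Op d, Ψ ρ = R (fun x a => (M x a * ρ).trace)) :
    LEA Ψ := by
  intro N ρ hρ
  rw [tensorPowMap_eq_tensorPowPrep R M Ψ hΨ]
  exact separableState_tensorPowPrep R (hloc N ρ hρ) hR

/-- if all multipartite behaviours generated by the POVMs `M` are Bell local,
then for any positive map `R` from conditional probabilities to density matrices, the
composition `Ψ = R ∘ M` is locally entanglement annihilating. -/
theorem stmt_9 {d nx na : ℕ} (M : Fin nx → Fin na → Op d) (hM : IsPOVMSet M)
    (hloc : ∀ (N : ℕ) (ρ : Matrix (Fin N → Fin d) (Fin N → Fin d) ℂ),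
      IsDensity ρ → BellLocalC (BehaviourOf M ρ))
    (R : (Fin nx → Fin na → ℂ) →ₗ[ℂ] Op d)
    (hR : ∀ p : Fin nx → Fin na → ℝ, IsCondProb p →
      IsDensity (R (fun x a => ((p x a : ℝ) : ℂ))))
    (Ψ : Op d →ₗ[ℂ] Op d)
    (hΨ : ∀ ρ : Op d, Ψ ρ = R (fun x a => (M x a * ρ).trace)) :
    LEA Ψ :=
  stmt_9_general M hloc R hR Ψ hΨ
end
end

section
/- The operator Z⊗Z + Z⊗X + X⊗Z − X⊗X, where X and Z are the Pauli matrices on ℂ², has maximal eigenvalue 2√2. -/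
open Matrix BigOperators Kronecker ComplexOrder

noncomputable section

def Zm : Op 2 := !![1, 0; 0, -1]
def Xm : Op 2 := !![0, 1; 1, 0]

/-!
With `Y = i X Z`, the operator `M = Z⊗Z + Z⊗X + X⊗Z − X⊗X` satisfies `M² = 4 (1 + Y⊗Y)` and
`M (Y⊗Y) = M`, hence `M³ = 8 M`: every eigenvalue lies in `{0, 2√2, −2√2}`. Since `M` is
traceless and nonzero, some eigenvalue is positive, so it is `2√2`.
-/

open Polynomial

namespace Matrix.IsHermitian

variable {𝕜 n : Type*} [RCLike 𝕜] [Fintype n] [DecidableEq n] {A : Matrix n n 𝕜}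

theorem eval_eigenvalues_eq_zero_of_aeval_eq_zero (hA : A.IsHermitian) {p : ℝ[X]}
    (hp : aeval A p = 0) (i : n) : p.eval (hA.eigenvalues i) = 0 := by
  have : Nonempty n := ⟨i⟩
  simpa [hp, spectrum.zero_eq] using
    spectrum.subset_polynomial_aeval A p ⟨_, hA.eigenvalues_mem_spectrum_real i, rfl⟩

theorem exists_eigenvalues_pos_of_trace_eq_zero (hA : A.IsHermitian) (htr : A.trace = 0)
    (hA0 : A ≠ 0) : ∃ i, 0 < hA.eigenvalues i := by
  by_contra! hnonpos
  have hsum : ∑ i, hA.eigenvalues i = 0 := by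
    rwa [hA.trace_eq_sum_eigenvalues, ← RCLike.ofReal_sum, RCLike.ofReal_eq_zero] at htr
  have hzero : hA.eigenvalues = 0 := funext fun i =>
    (Finset.sum_eq_zero_iff_of_nonpos fun j _ => hnonpos j).mp hsum i (Finset.mem_univ i)
  exact hA0 (hA.eigenvalues_eq_zero_iff.mp hzero)

end Matrix.IsHermitian

theorem eq_zero_or_eq_or_eq_neg_of_pow_three_eq {R : Type*} [CommRing R] [IsDomain R] {x c : R}
    (h : x ^ 3 = c ^ 2 * x) : x = 0 ∨ x = c ∨ x = -c := by
  have : x * ((x - c) * (x + c)) = 0 := by linear_combination h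
  rcases mul_eq_zero.mp this with h0 | h1
  · exact Or.inl h0
  rcases mul_eq_zero.mp h1 with h2 | h3
  · exact Or.inr (Or.inl (sub_eq_zero.mp h2))
  · exact Or.inr (Or.inr (eq_neg_of_add_eq_zero_left h3))

local notation "𝐌" => Zm ⊗ₖ Zm + Zm ⊗ₖ Xm + Xm ⊗ₖ Zm - Xm ⊗ₖ Xm

theorem chsh_isHermitian : (𝐌).IsHermitian := by
  ext ⟨a, b⟩ ⟨c, d⟩
  fin_cases a <;> fin_cases b <;> fin_cases c <;> fin_cases d <;> simp [Zm, Xm]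

theorem chsh_pow_three : 𝐌 ^ 3 = (8 : ℝ) • 𝐌 := by
  ext ⟨a, b⟩ ⟨c, d⟩
  simp only [pow_three, mul_apply, Fintype.sum_prod_type, Fin.sum_univ_two, Matrix.smul_apply,
    Matrix.sub_apply, Matrix.add_apply, kroneckerMap_apply]
  fin_cases a <;> fin_cases b <;> fin_cases c <;> fin_cases d <;> simp [Zm, Xm] <;> ring

theorem trace_chsh : (𝐌).trace = 0 := by
  simp [trace, Fintype.sum_prod_type, Zm, Xm]

theorem chsh_ne_zero : 𝐌 ≠ 0 := fun h => by
  simpa [Zm, Xm] using congrFun (congrFun h (0, 0)) (0, 0)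

theorem chsh_eigenvalues_mem (h : (𝐌).IsHermitian) (i : Fin 2 × Fin 2) :
    h.eigenvalues i = 0 ∨ h.eigenvalues i = 2 * √2 ∨ h.eigenvalues i = -(2 * √2) := by
  have hcube : h.eigenvalues i ^ 3 - 8 * h.eigenvalues i = 0 := by
    have := h.eval_eigenvalues_eq_zero_of_aeval_eq_zero (p := X ^ 3 - C 8 * X)
      (by simp [chsh_pow_three, Algebra.smul_def]) i
    rwa [eval_sub, eval_pow, eval_mul, eval_C, eval_X] at this
  apply eq_zero_or_eq_or_eq_neg_of_pow_three_eq
  rw [mul_pow, Real.sq_sqrt zero_le_two]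
  linear_combination hcube

/-- the operator `Z⊗Z + Z⊗X + X⊗Z − X⊗X` has maximal eigenvalue `2√2`. -/
theorem stmt_15 :
    ∃ h : (Zm ⊗ₖ Zm + Zm ⊗ₖ Xm + Xm ⊗ₖ Zm - Xm ⊗ₖ Xm).IsHermitian,
      (∀ i, h.eigenvalues i ≤ 2 * Real.sqrt 2) ∧
      (∃ i, h.eigenvalues i = 2 * Real.sqrt 2) := by
  have h := chsh_isHermitian
  have hpos : 0 < 2 * √2 := by positivity
  refine ⟨h, fun i => ?_, ?_⟩
  · rcases chsh_eigenvalues_mem h i with hi | hi | hi <;> rw [hi] <;> linarith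
  · obtain ⟨i, hi⟩ := h.exists_eigenvalues_pos_of_trace_eq_zero trace_chsh chsh_ne_zero
    refine ⟨i, ?_⟩
    rcases chsh_eigenvalues_mem h i with h0 | h2 | h3
    · linarith
    · exact h2
    · linarith
end
end

section
/- Let T^{η*}_{a|x} be the η*-noisy trine qubit measurements, decomposed as T^{η*}_{a|x} = p T_{a|x} + (1−p) T^{2/3}_{a|x} where T^{2/3}_{a|x} = (2/3)T_{a|x} + I/6 is jointly measurable and the pair (T_{a|x}, arbitrary measurements) never violates bipartite Bell inequalities when paired with T^{η*}. Then for any three-qubit state ρ_3, any term of the form Tr[ρ_3 (T_{a|x} ⊗ T^{η*}_{b|y} ⊗ T^{2/3}_{c|z})] admits a local hidden variable model: it equals Σ_{μ,λ} p(μ,λ) p^{(1)}(a|x,μ,λ) p^{(2)}(b|y,μ,λ) p^{(3)}(c|z,λ). -/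
open Matrix BigOperators Kronecker ComplexOrder

noncomputable section

/-- Trine qubit measurements `T_{a|x} = ½(I + (−1)^a v_x·σ)`. -/
def Tm : Fin 3 → Fin 2 → Op 2 :=
  fun x a => (1 / 2 : ℂ) •
    ((1 : Op 2) + ((-1 : ℂ) ^ (a : ℕ)) •
      (((Real.cos (2 * Real.pi * (x : ℕ) / 3) : ℂ)) • Xm
        + ((Real.sin (2 * Real.pi * (x : ℕ) / 3) : ℂ)) • Zm)) 

/-- The `2/3`-noisy trine measurements `T^{2/3}_{a|x} = (2/3)T_{a|x} + I/6`. -/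
def T23 : Fin 3 → Fin 2 → Op 2 :=
  fun x a => (2 / 3 : ℂ) • Tm x a + (1 / 6 : ℂ) • (1 : Op 2)

/-- The `η*`-noisy trine measurements, written as `p T + (1−p) T^{2/3}`. -/
def Tstar (p : ℝ) : Fin 3 → Fin 2 → Op 2 :=
  fun x a => p • Tm x a + (1 - p) • T23 x a

/-!
Measure the joint POVM `G` of `T^{2/3}` on the third qubit. Outcome `λ` leaves the first two
qubits in the unnormalised state `Tr₃[ρ₃ (1 ⊗ 1 ⊗ G_λ)]`, which is positive semidefinite and whose
traces sum to `1` over `λ`; after normalisation, the bipartite hypothesis gives the pair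
`(T, T^{η*})` a local model on it with hidden variable `μ`. As `T^{2/3}_{c|z} = Σ_λ p(c|z,λ) G_λ`,
the tripartite behaviour is the mixture over `λ` of these models weighted by the traces, and the
third party answers with `p(c|z,λ)`.
-/

theorem Fintype.sum_pi_fin_three {α M : Type*} [Fintype α] [AddCommMonoid M]
    (f : (Fin 3 → α) → M) : ∑ v, f v = ∑ i, ∑ j, ∑ k, f ![i, j, k] := by
  simp [← (Fin.consEquiv fun _ => α).sum_comp, Fintype.sum_prod_type, Fin.consEquiv,
    Subsingleton.elim (default : Fin 0 → α) ![]]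

theorem Matrix.PosSemidef.ofReal_re_trace {n : Type*} [Fintype n] {A : Matrix n n ℂ}
    (hA : A.PosSemidef) : ((A.trace.re : ℝ) : ℂ) = A.trace :=
  (Complex.eq_re_of_ofReal_le (by exact_mod_cast hA.trace_nonneg)).symm

section CondState

variable {d : ℕ} (ρ : Matrix (Fin 3 → Fin d) (Fin 3 → Fin d) ℂ)

/-- `condState ρ G = Tr₃[ρ (1 ⊗ 1 ⊗ G)]`: the unnormalised state of the first two systems after
outcome `G` is observed on the third. -/
def condState : Op d →ₗ[ℂ] Matrix (Fin d × Fin d) (Fin d × Fin d) ℂ where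
  toFun G := Matrix.of fun pq rs => ∑ m, ∑ n, ρ ![pq.1, pq.2, m] ![rs.1, rs.2, n] * G n m
  map_add' G H := by
    ext
    simp [mul_add, Finset.sum_add_distrib]
  map_smul' c G := by
    ext
    simp [Finset.mul_sum, mul_left_comm]

theorem condState_apply (G : Op d) (pq rs : Fin d × Fin d) :
    condState ρ G pq rs = ∑ m, ∑ n, ρ ![pq.1, pq.2, m] ![rs.1, rs.2, n] * G n m :=
  rfl

theorem trace_mul_tensorOp_eq_trace_condState_mul_kronecker (A B G : Op d) :
    (ρ * tensorOp ![A, B, G]).trace = (condState ρ G * (A ⊗ₖ B)).trace := by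
  simp only [trace, diag, mul_apply, tensorOp, condState_apply, of_apply, Fin.prod_univ_three,
    kroneckerMap_apply, Fintype.sum_prod_type, Fintype.sum_pi_fin_three, Finset.sum_mul, cons_val]
  refine Finset.sum_congr rfl fun i _ => Finset.sum_congr rfl fun j _ => ?_
  rw [Finset.sum_comm]
  refine Finset.sum_congr rfl fun i' _ => ?_
  rw [Finset.sum_comm]
  refine Finset.sum_congr rfl fun j' _ => Finset.sum_congr rfl fun k _ =>
    Finset.sum_congr rfl fun k' _ => ?_
  ring

theorem trace_condState_one : (condState ρ 1).trace = ρ.trace := by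
  simp [trace, condState_apply, one_apply, Fintype.sum_prod_type, Fintype.sum_pi_fin_three]

theorem condState_posSemidef {ρ : Matrix (Fin 3 → Fin d) (Fin 3 → Fin d) ℂ} (hρ : ρ.PosSemidef)
    {G : Op d} (hG : G.PosSemidef) : (condState ρ G).PosSemidef := by
  open scoped MatrixOrder in
  obtain ⟨B, rfl⟩ := CStarAlgebra.nonneg_iff_eq_star_mul_self.mp hG.nonneg
  -- `K k = 1 ⊗ 1 ⊗ ⟨b_k|`, where `b_k` is the `k`-th row of `B`.
  let K : Fin d → Matrix (Fin d × Fin d) (Fin 3 → Fin d) ℂ := fun k =>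
    Matrix.of fun pq v => if v 0 = pq.1 ∧ v 1 = pq.2 then B k (v 2) else 0
  have hK : condState ρ (star B * B) = ∑ k, K k * ρ * (K k)ᴴ := by
    ext pq rs
    simp only [K, condState_apply, Matrix.sum_apply, mul_apply, of_apply, conjTranspose_apply,
      Fintype.sum_pi_fin_three, ite_and, cons_val_zero, cons_val_one, cons_val_two, ite_mul,
      mul_ite, zero_mul, mul_zero, apply_ite star, star_zero, Finset.sum_mul, Finset.mul_sum]
    simp only [star_apply, RCLike.star_def, tail_cons, head_cons, ite_mul, zero_mul,
      Finset.sum_ite_irrel, Finset.sum_const_zero, Finset.sum_ite_eq', Finset.mem_univ, if_true]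
    conv_lhs => enter [2, m]; rw [Finset.sum_comm]
    rw [Finset.sum_comm]
    refine Finset.sum_congr rfl fun k _ => ?_
    rw [Finset.sum_comm]
    refine Finset.sum_congr rfl fun n _ => Finset.sum_congr rfl fun m _ => ?_
    ring
  rw [hK]
  exact posSemidef_sum _ fun k _ => hρ.mul_mul_conjTranspose_same (K k)

theorem sum_trace_condState {m : ℕ} {G : Fin m → Op d} (hG : ∑ l, G l = 1) :
    ∑ l, (condState ρ (G l)).trace = ρ.trace := by
  rw [← trace_sum, ← map_sum, hG, trace_condState_one]

end CondState

section LocalModel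

variable {nx ny na nb : ℕ}

def HasLocalModel (m : ℕ) (P : Fin nx → Fin ny → Fin na → Fin nb → ℂ) : Prop :=
  ∃ (q : Fin m → ℝ) (c1 : Fin m → Fin nx → Fin na → ℝ) (c2 : Fin m → Fin ny → Fin nb → ℝ),
    (∀ μ, 0 ≤ q μ) ∧ (∑ μ, q μ = 1) ∧ (∀ μ, IsCondProb (c1 μ)) ∧ (∀ μ, IsCondProb (c2 μ)) ∧
    ∀ x y a b, P x y a b = ((∑ μ, q μ * c1 μ x a * c2 μ y b : ℝ) : ℂ)

theorem isCondProb_uniform [NeZero na] :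
    IsCondProb fun (_ : Fin nx) (_ : Fin na) => (1 / na : ℝ) :=
  ⟨fun _ _ => by positivity, fun _ => by simp⟩

theorem exists_hasLocalModel [NeZero na] [NeZero nb] :
    ∃ (m : ℕ) (P : Fin nx → Fin ny → Fin na → Fin nb → ℂ), HasLocalModel m P :=
  ⟨1, _, fun _ => 1, _, _, fun _ => zero_le_one, by simp, fun _ => isCondProb_uniform,
    fun _ => isCondProb_uniform, fun _ _ _ _ => rfl⟩

theorem HasLocalModel.mono {m M : ℕ} {P : Fin nx → Fin ny → Fin na → Fin nb → ℂ}
    (h : HasLocalModel m P) (hmM : m ≤ M) : HasLocalModel M P := by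
  obtain ⟨q, c1, c2, hq0, hq1, hc1, hc2, hP⟩ := h
  have : Nonempty (Fin m) := ⟨⟨0, Nat.pos_of_ne_zero fun hm => by subst hm; simp at hq1⟩⟩
  set ι := Fin.castLE hmM
  have hι : Function.Injective ι := Fin.castLE_injective hmM
  set r := Function.invFun ι
  have hr : ∀ ν, r (ι ν) = ν := Function.leftInverse_invFun hι
  have hq'0 : 0 ≤ Function.extend ι q 0 := Function.extend_nonneg hq0 le_rfl
  have hq'1 : ∑ μ, Function.extend ι q 0 μ = 1 := by
    rw [← hq1]
    refine (Fintype.sum_of_injective ι hι _ _ (fun μ hμ => ?_) (fun ν => ?_)).symm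
    · exact Function.extend_apply' q (0 : Fin M → ℝ) μ hμ
    · exact (hι.extend_apply _ _ _).symm
  refine ⟨Function.extend ι q 0, fun μ => c1 (r μ), fun μ => c2 (r μ), hq'0, hq'1,
    fun μ => hc1 _, fun μ => hc2 _, fun x y a b => ?_⟩
  rw [hP]
  congr 1
  refine Fintype.sum_of_injective ι hι _ _ (fun μ hμ => ?_) (fun ν => ?_)
  · simp [Function.extend_apply' q (0 : Fin M → ℝ) μ hμ]
  · simp [hι.extend_apply, hr]

theorem exists_hasLocalModel_of_posSemidef [NeZero na] [NeZero nb] {d e : ℕ}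
    {N : Fin nx → Fin na → Op d} {T : Fin ny → Fin nb → Op e}
    (hloc : ∀ σ : Matrix (Fin d × Fin e) (Fin d × Fin e) ℂ, IsDensity σ →
      ∃ m, HasLocalModel m fun x y a b => (σ * (N x a ⊗ₖ T y b)).trace)
    {σ : Matrix (Fin d × Fin e) (Fin d × Fin e) ℂ} (hσ : σ.PosSemidef) :
    ∃ m P, HasLocalModel m P ∧
      ∀ x y a b, (σ * (N x a ⊗ₖ T y b)).trace = (σ.trace.re : ℂ) * P x y a b := by
  by_cases h0 : σ.trace = 0
  · obtain ⟨m, P, hP⟩ := exists_hasLocalModel (nx := nx) (ny := ny) (na := na) (nb := nb)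
    refine ⟨m, P, hP, fun x y a b => ?_⟩
    simp [hσ.trace_eq_zero_iff.mp h0]
  set t := σ.trace.re
  have ht : (t : ℂ) = σ.trace := hσ.ofReal_re_trace
  have ht0 : (t : ℂ) ≠ 0 := ht ▸ h0
  obtain ⟨m, hm⟩ := hloc (t⁻¹ • σ)
    ⟨hσ.smul (inv_nonneg.mpr (Complex.nonneg_iff.mp hσ.trace_nonneg).1), by
      rw [trace_smul, Complex.real_smul, ← ht, Complex.ofReal_inv, inv_mul_cancel₀ ht0]⟩
  refine ⟨m, _, hm, fun x y a b => ?_⟩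
  rw [smul_mul, trace_smul, Complex.real_smul, Complex.ofReal_inv, ← mul_assoc,
    mul_inv_cancel₀ ht0, one_mul]

theorem exists_tripartite_model_of_mixture {ml nz nc : ℕ} {t : Fin ml → ℝ}
    (ht0 : ∀ l, 0 ≤ t l) (ht1 : ∑ l, t l = 1) {P : Fin ml → Fin nx → Fin ny → Fin na → Fin nb → ℂ}
    (hP : ∀ l, ∃ m, HasLocalModel m (P l)) (p3 : Fin ml → Fin nz → Fin nc → ℝ) :
    ∃ (mμ : ℕ) (w : Fin mμ → Fin ml → ℝ) (p1 : Fin mμ → Fin ml → Fin nx → Fin na → ℝ)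
      (p2 : Fin mμ → Fin ml → Fin ny → Fin nb → ℝ),
      (∀ μ l, 0 ≤ w μ l) ∧ (∑ μ, ∑ l, w μ l = 1) ∧
      (∀ μ l, IsCondProb (p1 μ l)) ∧ (∀ μ l, IsCondProb (p2 μ l)) ∧
      ∀ x y z a b c, ∑ l, (p3 l z c : ℂ) * ((t l : ℂ) * P l x y a b)
        = ((∑ μ, ∑ l, w μ l * p1 μ l x a * p2 μ l y b * p3 l z c : ℝ) : ℂ) := by
  choose m hm using hP
  choose q c1 c2 hq0 hq1 hc1 hc2 hPq using
    fun l => (hm l).mono (Finset.le_sup (f := m) (Finset.mem_univ l))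
  refine ⟨Finset.univ.sup m, fun μ l => t l * q l μ, fun μ l => c1 l μ, fun μ l => c2 l μ,
    fun μ l => mul_nonneg (ht0 l) (hq0 l μ), ?_, fun μ l => hc1 l μ, fun μ l => hc2 l μ,
    fun x y z a b c => ?_⟩
  · rw [Finset.sum_comm]
    simp [← Finset.mul_sum, hq1, ht1]
  · simp only [hPq]
    push_cast
    rw [Finset.sum_comm]
    simp only [Finset.mul_sum]
    refine Finset.sum_congr rfl fun l _ => Finset.sum_congr rfl fun μ _ => ?_
    ring

end LocalModel

theorem isStarProjection_bloch {c s : ℝ} (hcs : c ^ 2 + s ^ 2 = 1) :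
    IsStarProjection ((1 / 2 : ℂ) • ((1 : Op 2) + ((c : ℂ) • Xm + (s : ℂ) • Zm))) := by
  have hcs' : (c : ℂ) ^ 2 + (s : ℂ) ^ 2 = 1 := by exact_mod_cast hcs
  constructor
  · rw [IsIdempotentElem]
    ext i j
    fin_cases i <;> fin_cases j <;> simp [Xm, Zm, mul_apply, Fin.sum_univ_two] <;>
      first | linear_combination (1 / 4 : ℂ) * hcs' | ring
  · rw [IsSelfAdjoint, star_eq_conjTranspose]
    ext i j
    fin_cases i <;> fin_cases j <;> simp [Xm, Zm] <;> ring

theorem Tm_one (x : Fin 3) : Tm x 1 = 1 - Tm x 0 := by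
  ext i j
  fin_cases i <;> fin_cases j <;> simp [Tm] <;> ring

theorem isPOVMSet_Tm : IsPOVMSet Tm := by
  open scoped MatrixOrder in
  have h0 : ∀ x, IsStarProjection (Tm x 0) := fun x => by
    simp only [Tm, Fin.val_zero, pow_zero, one_smul]
    exact isStarProjection_bloch (Real.cos_sq_add_sin_sq _)
  refine fun x => ⟨fun a => ?_, by simp [Fin.sum_univ_two, Tm_one]⟩
  rw [← nonneg_iff_posSemidef]
  fin_cases a
  · exact (h0 x).nonneg
  · simpa [Tm_one] using (h0 x).one_sub.nonneg

theorem stmt_19_general (p : ℝ)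
    (hJM : JointlyMeasurable T23)
    (hbip : ∀ (nx' na' : ℕ) (Nm : Fin nx' → Fin na' → Op 2), IsPOVMSet Nm →
      ∀ σ : Matrix (Fin 2 × Fin 2) (Fin 2 × Fin 2) ℂ, IsDensity σ →
        ∃ (m : ℕ) (q : Fin m → ℝ) (c1 : Fin m → Fin nx' → Fin na' → ℝ)
          (c2 : Fin m → Fin 3 → Fin 2 → ℝ),
          (∀ l, 0 ≤ q l) ∧ (∑ l, q l = 1) ∧
          (∀ l, IsCondProb (c1 l)) ∧ (∀ l, IsCondProb (c2 l)) ∧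
          ∀ x y a b, (σ * (Nm x a ⊗ₖ Tstar p y b)).trace
            = ((∑ l, q l * c1 l x a * c2 l y b : ℝ) : ℂ))
    (ρ3 : Matrix (Fin 3 → Fin 2) (Fin 3 → Fin 2) ℂ) (hρ : IsDensity ρ3) :
    ∃ (mμ ml : ℕ) (w : Fin mμ → Fin ml → ℝ)
      (p1 p2 : Fin mμ → Fin ml → Fin 3 → Fin 2 → ℝ) (p3 : Fin ml → Fin 3 → Fin 2 → ℝ),
      (∀ μ l, 0 ≤ w μ l) ∧ (∑ μ, ∑ l, w μ l = 1) ∧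
      (∀ μ l, IsCondProb (p1 μ l)) ∧ (∀ μ l, IsCondProb (p2 μ l)) ∧
      (∀ l, IsCondProb (p3 l)) ∧
      ∀ (x y z : Fin 3) (a b c : Fin 2),
        (ρ3 * tensorOp ![Tm x a, Tstar p y b, T23 z c]).trace
          = ((∑ μ, ∑ l, w μ l * p1 μ l x a * p2 μ l y b * p3 l z c : ℝ) : ℂ) := by
  obtain ⟨ml, G, p3, hG, hp3, hT23⟩ := hJM
  have hcond (l : Fin ml) : (condState ρ3 (G l)).PosSemidef := condState_posSemidef hρ.1 (hG.1 l)
  choose m P hP hPeq using fun l =>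
    exists_hasLocalModel_of_posSemidef (hbip 3 2 Tm isPOVMSet_Tm) (hcond l)
  obtain ⟨mμ, w, p1, p2, hw0, hw1, hp1, hp2, hw⟩ :=
    exists_tripartite_model_of_mixture (fun l => (Complex.nonneg_iff.mp (hcond l).trace_nonneg).1)
      (by rw [← Complex.re_sum, sum_trace_condState ρ3 hG.2, hρ.2, Complex.one_re])
      (fun l => ⟨m l, hP l⟩) p3
  refine ⟨mμ, ml, w, p1, p2, p3, hw0, hw1, hp1, hp2, hp3, fun x y z a b c => ?_⟩
  rw [← hw, trace_mul_tensorOp_eq_trace_condState_mul_kronecker, hT23, map_sum, Finset.sum_mul,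
    trace_sum]
  refine Finset.sum_congr rfl fun l _ => ?_
  rw [LinearMap.map_smul_of_tower, smul_mul, trace_smul, hPeq, Complex.real_smul]

/-- assuming `T^{2/3}` is jointly measurable and `T^{η*}` never violates any
bipartite Bell inequality no matter what the other party measures, every term
`Tr[ρ₃ (T_{a|x} ⊗ T^{η*}_{b|y} ⊗ T^{2/3}_{c|z})]` admits a local hidden variable model. -/
theorem stmt_19 (p : ℝ) (hp0 : 0 ≤ p) (hp1 : p ≤ 1)
    (hJM : JointlyMeasurable T23)
    (hbip : ∀ (nx' na' : ℕ) (Nm : Fin nx' → Fin na' → Op 2), IsPOVMSet Nm →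
      ∀ σ : Matrix (Fin 2 × Fin 2) (Fin 2 × Fin 2) ℂ, IsDensity σ →
        ∃ (m : ℕ) (q : Fin m → ℝ) (c1 : Fin m → Fin nx' → Fin na' → ℝ)
          (c2 : Fin m → Fin 3 → Fin 2 → ℝ),
          (∀ l, 0 ≤ q l) ∧ (∑ l, q l = 1) ∧
          (∀ l, IsCondProb (c1 l)) ∧ (∀ l, IsCondProb (c2 l)) ∧
          ∀ x y a b, (σ * (Nm x a ⊗ₖ Tstar p y b)).trace
            = ((∑ l, q l * c1 l x a * c2 l y b : ℝ) : ℂ))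
    (ρ3 : Matrix (Fin 3 → Fin 2) (Fin 3 → Fin 2) ℂ) (hρ : IsDensity ρ3) :
    ∃ (mμ ml : ℕ) (w : Fin mμ → Fin ml → ℝ)
      (p1 p2 : Fin mμ → Fin ml → Fin 3 → Fin 2 → ℝ) (p3 : Fin ml → Fin 3 → Fin 2 → ℝ),
      (∀ μ l, 0 ≤ w μ l) ∧ (∑ μ, ∑ l, w μ l = 1) ∧
      (∀ μ l, IsCondProb (p1 μ l)) ∧ (∀ μ l, IsCondProb (p2 μ l)) ∧
      (∀ l, IsCondProb (p3 l)) ∧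
      ∀ (x y z : Fin 3) (a b c : Fin 2),
        (ρ3 * tensorOp ![Tm x a, Tstar p y b, T23 z c]).trace
          = ((∑ μ, ∑ l, w μ l * p1 μ l x a * p2 μ l y b * p3 l z c : ℝ) : ℂ) :=
  stmt_19_general p hJM hbip ρ3 hρ
end
end
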